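/- For any tree T with at least one edge, the set of leaves of T is the unique minimum monitoring edge-geodetic set of T; in particular MEG(T) equals the number of leaves of T. -/

import Mathlib

open SimpleGraph

/-- Two vertices `x` and `y` monitor an edge `e` in `G`: there is a shortest path between
them, and `e` lies on every shortest path between `x` and `y`. -/
def Monitors {V : Type*} (G : SimpleGraph V) (x y : V) (e : Sym2 V) : Prop :=
  (∃ p : G.Walk x y, p.IsPath ∧ p.length = G.dist x y) ∧
    ∀ p : G.Walk x y, p.IsPath → p.length = G.dist x y → e ∈ p.edges

/-- `S` is a monitoring edge-geodetic set of `G`. -/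
def IsMEGSet {V : Type*} (G : SimpleGraph V) (S : Set V) : Prop :=
  ∀ e ∈ G.edgeSet, ∃ x ∈ S, ∃ y ∈ S, Monitors G x y e

/-- The minimum size of a monitoring edge-geodetic set of `G`. -/
noncomputable def megNum {V : Type*} (G : SimpleGraph V) : ℕ :=
  sInf {n | ∃ S : Set V, IsMEGSet G S ∧ S.ncard = n}

/-- The set of leaves (degree-1 vertices) of `G`. -/
def leaves {V : Type*} (G : SimpleGraph V) : Set V :=
  {v | (G.neighborSet v).ncard = 1}

/-!
Take a longest path through an edge `e` of a finite tree. By acyclicity every neighbour of an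
endpoint already lies on the path (otherwise the path would extend), so both endpoints are leaves,
and the unique path between them monitors `e`. Conversely, a leaf is never an inner vertex of a
path, so an edge at a leaf is monitored only by pairs containing that leaf.
-/

namespace SimpleGraph

variable {V : Type*} {G : SimpleGraph V}

theorem IsTree.monitors_of_mem_edges (hT : G.IsTree) {x y : V} {e : Sym2 V} {p : G.Walk x y}
    (hp : p.IsPath) (he : e ∈ p.edges) : Monitors G x y e := by
  have eq_p : ∀ q : G.Walk x y, q.IsPath → q = p := fun q hq =>
    (hT.existsUnique_path x y).unique hq hp
  obtain ⟨q, hq⟩ := hT.connected.exists_walk_length_eq_dist x y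
  refine ⟨⟨p, hp, ?_⟩, fun r hr _ => eq_p r hr ▸ he⟩
  rwa [← eq_p q (q.isPath_of_length_eq_dist hq)]

theorem IsAcyclic.mem_leaves_of_neighborSet_subset_support (hG : G.IsAcyclic) {x y : V}
    {p : G.Walk x y} (hp : p.IsPath) (hnil : ¬p.Nil)
    (hnbr : G.neighborSet x ⊆ {w | w ∈ p.support}) : x ∈ leaves G := by
  have : G.neighborSet x = {p.snd} :=
    Set.eq_singleton_iff_unique_mem.mpr
      ⟨p.adj_snd hnil, fun w hw => hG.eq_snd_of_adj_start hp hw (hnbr hw)⟩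
  simp [leaves, this]

theorem exists_isPath_mem_edges_forall_length_le [Finite V] {e : Sym2 V} (he : e ∈ G.edgeSet) :
    ∃ (x y : V) (p : G.Walk x y), p.IsPath ∧ e ∈ p.edges ∧
      ∀ (x' y' : V) (q : G.Walk x' y'), q.IsPath → e ∈ q.edges → q.length ≤ p.length := by
  have := Fintype.ofFinite V
  set lengths := {n | ∃ (x y : V) (p : G.Walk x y), p.IsPath ∧ e ∈ p.edges ∧ p.length = n}
  have hne : lengths.Nonempty := by
    induction e with
    | h u v =>
      have huv : G.Adj u v := he
      exact ⟨_, u, v, huv.toWalk, by simp [huv.ne], by simp, rfl⟩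
  have hbdd : BddAbove lengths :=
    ⟨Fintype.card V, fun _ ⟨_, _, p, hp, _, hn⟩ => hn ▸ hp.length_lt.le⟩
  obtain ⟨x, y, p, hp, hep, hn⟩ := Nat.sSup_mem hne hbdd
  exact ⟨x, y, p, hp, hep, fun x' y' q hq heq => hn ▸ le_csSup hbdd ⟨x', y', q, hq, heq, rfl⟩⟩

theorem IsAcyclic.start_mem_leaves_of_longest (hG : G.IsAcyclic) {x y : V} {e : Sym2 V}
    {p : G.Walk x y} (hp : p.IsPath) (he : e ∈ p.edges)
    (hmax : ∀ (x' y' : V) (q : G.Walk x' y'), q.IsPath → e ∈ q.edges → q.length ≤ p.length) :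
    x ∈ leaves G := by
  refine hG.mem_leaves_of_neighborSet_subset_support hp
    (fun h => by simp [Walk.edges_eq_nil.mpr h] at he) fun w hw => ?_
  by_contra hwp
  have := hmax w y (p.cons hw.symm) (hp.cons hwp) (by simp [he])
  simp at this

theorem IsTree.isMEGSet_leaves [Finite V] (hT : G.IsTree) : IsMEGSet G (leaves G) := by
  intro e he
  obtain ⟨x, y, p, hp, hep, hmax⟩ := exists_isPath_mem_edges_forall_length_le he
  have hx := hT.isAcyclic.start_mem_leaves_of_longest hp hep hmax
  have hy := hT.isAcyclic.start_mem_leaves_of_longest hp.reverse (by simpa using hep)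
    (by simpa using hmax)
  exact ⟨x, hx, y, hy, hT.monitors_of_mem_edges hp hep⟩

theorem leaves_subset_of_isMEGSet {S : Set V} (hS : IsMEGSet G S) : leaves G ⊆ S := by
  intro v hv
  obtain ⟨u, hu⟩ := Set.ncard_eq_one.mp hv
  have huv : G.Adj v u := (hu.symm ▸ rfl : u ∈ G.neighborSet v)
  obtain ⟨x, hx, y, hy, ⟨p, hp, hl⟩, hall⟩ := hS s(v, u) huv
  have hvp : v ∈ p.support := p.fst_mem_support_of_mem_edges (hall p hp hl)
  by_contra hvS
  exact hp.isTrail.not_mem_support_of_subsingleton_neighborSet (fun (h : v = x) => hvS (h ▸ hx))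
    (fun (h : v = y) => hvS (h ▸ hy)) (hu ▸ Set.subsingleton_singleton) hvp

theorem megNum_eq_ncard_of_forall_subset [Finite V] {S : Set V} (hS : IsMEGSet G S)
    (hmin : ∀ T : Set V, IsMEGSet G T → S ⊆ T) : megNum G = S.ncard :=
  le_antisymm (Nat.sInf_le ⟨S, hS, rfl⟩) <|
    le_csInf ⟨_, S, hS, rfl⟩ fun _ ⟨T, hTS, hcard⟩ => hcard ▸ Set.ncard_le_ncard (hmin T hTS)

end SimpleGraph

theorem tree_leaves_unique_min_MEG {V : Type*} [Fintype V] (G : SimpleGraph V)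
    (hT : G.IsTree) :
    IsMEGSet G (leaves G) ∧ (∀ S : Set V, IsMEGSet G S → leaves G ⊆ S) ∧
      megNum G = (leaves G).ncard := by
  have hMEG : IsMEGSet G (leaves G) := hT.isMEGSet_leaves
  have hmin : ∀ S : Set V, IsMEGSet G S → leaves G ⊆ S := fun _ => leaves_subset_of_isMEGSet
  exact ⟨hMEG, hmin, megNum_eq_ncard_of_forall_subset hMEG hmin⟩
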